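/- Let A be a commutative ring and let q ≥ 1. For each i = 1,…,q, let M_i be a saturated subset of ℕ^{r_i} (r_i ≥ 1), let φ_{i1},…,φ_{i r_i} be elements of A, and let I_i = 𝒤(M_i) be the ideal generated by {φ_{i1}^{b₁}⋯φ_{i r_i}^{b_{r_i}} : b ∈ M_i}. Let N be a saturated subset of ℕ^q. Then 𝒥(N) = 𝒤(M(N)), where 𝒥(N) = Σ_{b ∈ N} I₁^{b₁}⋯I_q^{b_q}, M(N) = ⋃_{c ∈ N} c₁M₁ × ⋯ × c_qM_q ⊆ ℕ^{r₁+⋯+r_q}, and 𝒤(M(N)) is the ideal generated by the monomials φ_{11}^{a_{11}}⋯φ_{q r_q}^{a_{q r_q}} for exponent vectors a ∈ M(N). -/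

import Mathlib

/-- A subset `N` of `ℕ^ι` is *saturated* if it is nonempty and
`a + ℕ^ι ⊆ N` for every `a ∈ N`. -/
def Saturated {ι : Type*} (N : Set (ι → ℕ)) : Prop :=
  N.Nonempty ∧ ∀ a ∈ N, ∀ c : ι → ℕ, a + c ∈ N

/-- `𝒤(M)`: the ideal of `A` generated by the monomials
`ψ₁^{a₁} ⋯ ψ_r^{a_r}` for `a ∈ M`. -/
def monIdeal {A : Type*} [CommRing A] {ι : Type*} [Fintype ι]
    (ψ : ι → A) (M : Set (ι → ℕ)) : Ideal A :=
  Ideal.span {x : A | ∃ b ∈ M, x = ∏ i, ψ i ^ b i}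

/-- `cM`: equal to `ℕ^ι` when `c = 0`, and to the `c`-fold Minkowski sum
of `M` with itself when `c > 0`. -/
def minkSum {ι : Type*} (c : ℕ) (M : Set (ι → ℕ)) : Set (ι → ℕ) :=
  if c = 0 then Set.univ
  else {b | ∃ f : Fin c → (ι → ℕ), (∀ i, f i ∈ M) ∧ b = ∑ i, f i}

/-- `M(N) = ⋃_{c ∈ N} c₁M₁ × ⋯ × c_qM_q ⊆ ℕ^{r₁+⋯+r_q}`. -/
def MsetOf {q : ℕ} {r : Fin q → ℕ} (M : ∀ i, Set (Fin (r i) → ℕ))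
    (N : Set (Fin q → ℕ)) : Set (((i : Fin q) × Fin (r i)) → ℕ) :=
  {a | ∃ c ∈ N, ∀ i : Fin q, (fun j => a ⟨i, j⟩) ∈ minkSum (c i) (M i)}

/-- `𝒥(N) = Σ_{b ∈ N} I₁^{b₁} ⋯ I_q^{b_q}`. -/
def Jideal {A : Type*} [CommRing A] {q : ℕ} (I : Fin q → Ideal A)
    (N : Set (Fin q → ℕ)) : Ideal A :=
  ⨆ b ∈ N, ∏ i, I i ^ b i


/-!
Every ideal in sight is generated by monomials in the `φ_{ij}`, and each operation in `𝒥(N)`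
acts on exponent sets: a product of monomial ideals is generated by the monomials whose
exponent vector is the sum (respectively, the juxtaposition) of the exponent vectors, so
`𝒤(M)^c = 𝒤(cM)` and `∏ᵢ 𝒤(Sᵢ) = 𝒤(S₁ × ⋯ × S_q)`, while a sum of monomial ideals is
generated by the union of the exponent sets.
-/

open Finset

section MonomialIdeals

variable {A : Type*} [CommRing A]

lemma prod_pow_sum_exponents {ι κ : Type*} [Fintype ι] (s : Finset κ) (ψ : ι → A)
    (f : κ → ι → ℕ) :
    ∏ j, ψ j ^ (∑ k ∈ s, f k) j = ∏ k ∈ s, ∏ j, ψ j ^ f k j := by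
  rw [prod_comm]
  simp only [Finset.sum_apply, prod_pow_eq_pow_sum]

lemma monIdeal_univ {ι : Type*} [Fintype ι] (ψ : ι → A) : monIdeal ψ Set.univ = ⊤ :=
  (Ideal.eq_top_iff_one _).2 <| Ideal.subset_span ⟨0, Set.mem_univ _, by simp⟩

lemma monIdeal_pow {ι : Type*} [Fintype ι] (ψ : ι → A) (M : Set (ι → ℕ)) (c : ℕ) :
    monIdeal ψ M ^ c = monIdeal ψ (minkSum c M) := by
  rcases eq_or_ne c 0 with rfl | hc
  · rw [pow_zero, minkSum, if_pos rfl, monIdeal_univ, Ideal.one_eq_top]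
  rw [← Fin.prod_const c, monIdeal, Ideal.prod_span, monIdeal, minkSum, if_neg hc]
  congr 1
  ext x
  simp only [Set.mem_fintype_prod, Set.mem_ofPred_eq]
  constructor
  · rintro ⟨g, hg, rfl⟩
    choose f hf hgf using hg
    refine ⟨∑ k, f k, ⟨f, hf, rfl⟩, ?_⟩
    rw [prod_pow_sum_exponents]
    exact prod_congr rfl fun k _ => hgf k
  · rintro ⟨_, ⟨f, hf, rfl⟩, rfl⟩
    exact ⟨fun k => ∏ j, ψ j ^ f k j, fun k => ⟨f k, hf k, rfl⟩,
      (prod_pow_sum_exponents _ ψ f).symm⟩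

lemma prod_monIdeal {ι : Type*} [Fintype ι] {σ : ι → Type*} [∀ i, Fintype (σ i)]
    (φ : ∀ i, σ i → A) (S : ∀ i, Set (σ i → ℕ)) :
    ∏ i, monIdeal (φ i) (S i)
      = monIdeal (fun p : (i : ι) × σ i => φ p.1 p.2)
          {a | ∀ i, (fun j => a ⟨i, j⟩) ∈ S i} := by
  simp only [monIdeal]
  rw [Ideal.prod_span]
  congr 1
  ext x
  simp only [Set.mem_fintype_prod, Set.mem_ofPred_eq, ← univ_sigma_univ, prod_sigma]
  constructor
  · rintro ⟨g, hg, rfl⟩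
    choose b hb hgb using hg
    exact ⟨fun p => b p.1 p.2, hb, prod_congr rfl fun i _ => hgb i⟩
  · rintro ⟨a, ha, rfl⟩
    exact ⟨fun i => ∏ j, φ i j ^ a ⟨i, j⟩, fun i => ⟨_, ha i, rfl⟩, rfl⟩

lemma iSup₂_monIdeal {ι κ : Type*} [Fintype ι] (ψ : ι → A) (N : Set κ)
    (S : κ → Set (ι → ℕ)) :
    ⨆ b ∈ N, monIdeal ψ (S b) = monIdeal ψ (⋃ b ∈ N, S b) := by
  simp only [monIdeal, ← Ideal.span_iUnion]
  congr 1
  ext x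
  simp only [Set.mem_iUnion, Set.mem_ofPred_eq, exists_prop]
  constructor
  · rintro ⟨b, hb, a, ha, rfl⟩
    exact ⟨a, ⟨b, hb, ha⟩, rfl⟩
  · rintro ⟨a, ⟨b, hb, ha⟩, rfl⟩
    exact ⟨b, hb, a, ha, rfl⟩

end MonomialIdeals

theorem Jideal_eq_monIdeal_MsetOf_general {A : Type*} [CommRing A]
    {q : ℕ} {r : Fin q → ℕ}
    (M : ∀ i, Set (Fin (r i) → ℕ))
    (φ : ∀ i, Fin (r i) → A) (I : Fin q → Ideal A)
    (hI : ∀ i, I i = monIdeal (φ i) (M i))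
    (N : Set (Fin q → ℕ)) :
    Jideal I N
      = monIdeal (fun p : (i : Fin q) × Fin (r i) => φ p.1 p.2) (MsetOf M N) := by
  have hprod : ∀ b : Fin q → ℕ, ∏ i, I i ^ b i
      = monIdeal (fun p : (i : Fin q) × Fin (r i) => φ p.1 p.2)
          {a | ∀ i, (fun j => a ⟨i, j⟩) ∈ minkSum (b i) (M i)} := fun b => by
    simp only [hI, monIdeal_pow, prod_monIdeal]
  simp only [Jideal, hprod, iSup₂_monIdeal]
  congr 1
  ext a
  simp [MsetOf]

/-- Lemma 2.8: if `I_i = 𝒤(M_i)` (relative to `φ_{i1}, …, φ_{i r_i}`) for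
saturated `M_i ⊆ ℕ^{r_i}`, and `N ⊆ ℕ^q` is saturated, then
`𝒥(N) = 𝒤(M(N))`, the latter taken with respect to the concatenated
sequence of all the `φ_{ij}`. -/
theorem Jideal_eq_monIdeal_MsetOf {A : Type*} [CommRing A]
    {q : ℕ} (hq : 1 ≤ q) {r : Fin q → ℕ} (hr : ∀ i, 1 ≤ r i)
    (M : ∀ i, Set (Fin (r i) → ℕ)) (hM : ∀ i, Saturated (M i))
    (φ : ∀ i, Fin (r i) → A) (I : Fin q → Ideal A)
    (hI : ∀ i, I i = monIdeal (φ i) (M i))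
    (N : Set (Fin q → ℕ)) (hN : Saturated N) :
    Jideal I N
      = monIdeal (fun p : (i : Fin q) × Fin (r i) => φ p.1 p.2) (MsetOf M N) :=
  Jideal_eq_monIdeal_MsetOf_general M φ I hI N
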